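/- arXiv:math/0010313 — 4 statements merged into one kernel-verified Lean document; each statement's English description precedes it below -/
import Mathlib

section
/- Let R be a Henselian local ring whose residue field Δ = R/m has characteristic 0, with residue map φ : R → Δ. Let F ⊆ R be a subfield (so that φ restricts to a field isomorphism of F onto the subfield F' = φ(F) of Δ), and let α ∈ Δ be a nonzero element algebraic over F' with monic minimal polynomial f̄ = X^m + β_1 X^{m−1} + ⋯ + β_m ∈ F'[X]. Let f = X^m + b_1 X^{m−1} + ⋯ + b_m ∈ F[X], where b_i ∈ F is the unique element with φ(b_i) = β_i. Then there exists a ∈ R such that f(a) = 0, a is a simple root of f, φ(a) = α, and f is the minimal polynomial of a over F; in particular a is algebraic over F. -/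
/-!
Since `Δ` has characteristic zero, the lifted polynomial `f` has a nonzero derivative, and `f'`
has smaller degree than the minimal polynomial `f̄` of `α`; hence `f'(α) ≠ 0`, i.e. `α` is a simple
root of `f̄`. Hensel's lemma lifts it to a root `a` of `f` with `φ a = α`, and `f'(a)` is a unit
because its residue `f'(α)` is nonzero. Any `q` with `q(a) = 0` also has `q(α) = 0`, so the
minimality of `f̄` passes to `f`.
-/

open Polynomial IsLocalRing

section MinimalRoot

variable {A K : Type*} [CommRing A] [Field K] [CharZero K]

theorem eval₂_derivative_ne_zero_of_forall_degree_le (φ : A →+* K) {p : A[X]} (hp : p.Monic)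
    {α : K} (hroot : p.eval₂ φ α = 0)
    (hmin : ∀ q : A[X], q ≠ 0 → q.eval₂ φ α = 0 → p.degree ≤ q.degree) :
    p.derivative.eval₂ φ α ≠ 0 := by
  have : Nontrivial A := φ.domain_nontrivial
  have hdeg : p.natDegree ≠ 0 := by
    intro h
    rw [hp.natDegree_eq_zero.mp h, eval₂_one] at hroot
    exact one_ne_zero hroot
  have hderiv : p.derivative ≠ 0 := by
    have hmap : (p.map φ).derivative ≠ 0 := by rwa [derivative_ne_zero, hp.natDegree_map]
    exact fun h => hmap (by rw [derivative_map, h, Polynomial.map_zero])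
  exact fun h => (hmin _ hderiv h).not_gt (degree_derivative_lt hp.ne_zero)

end MinimalRoot

section Henselian

variable {A R : Type*} [CommRing A] [CommRing R]

theorem residue_eval₂ [IsLocalRing R] (ψ : A →+* R) (p : A[X]) (a : R) :
    residue R (p.eval₂ ψ a) = p.eval₂ ((residue R).comp ψ) (residue R a) :=
  hom_eval₂ p ψ (residue R) a

theorem HenselianLocalRing.exists_eval₂_eq_zero_residue_eq [HenselianLocalRing R] (ψ : A →+* R)
    {p : A[X]} (hp : p.Monic) {α : ResidueField R}
    (hroot : p.eval₂ ((residue R).comp ψ) α = 0)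
    (hsimple : p.derivative.eval₂ ((residue R).comp ψ) α ≠ 0) :
    ∃ a : R, p.eval₂ ψ a = 0 ∧ residue R a = α := by
  have hensel := ((HenselianLocalRing.TFAE R).out 0 1).mp ‹_›
  obtain ⟨a, ha, hres⟩ := hensel (p.map ψ) (hp.map ψ) α
    (by rwa [aeval_def, eval₂_map]) (by rwa [aeval_def, derivative_map, eval₂_map])
  exact ⟨a, by rwa [IsRoot, eval_map] at ha, hres⟩

end Henselian

theorem statement8_general (R : Type u) [CommRing R] [IsLocalRing R] [HenselianLocalRing R]
    [CharZero (IsLocalRing.ResidueField R)]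
    (F : Subring R)
    (α : IsLocalRing.ResidueField R)
    (p : Polynomial F) (hmonic : p.Monic)
    -- `α` is a root of the image `f̄` of `p` in `F'[X] ⊆ Δ[X]`:
    (hroot : Polynomial.eval₂ ((IsLocalRing.residue R).comp F.subtype) α p = 0)
    -- `f̄` is the minimal polynomial of `α` over `F'`, i.e. of minimal degree:
    (hmin : ∀ q : Polynomial F, q ≠ 0 →
      Polynomial.eval₂ ((IsLocalRing.residue R).comp F.subtype) α q = 0 →
      p.degree ≤ q.degree) :
    ∃ a : R,
      -- `a` is a root of `f`:
      Polynomial.eval₂ F.subtype a p = 0 ∧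
      -- `a` is a simple root of `f`:
      IsUnit (Polynomial.eval₂ F.subtype a (Polynomial.derivative p)) ∧
      -- `φ a = α`:
      IsLocalRing.residue R a = α ∧
      -- `f` is the minimal polynomial of `a` over `F`:
      (∀ q : Polynomial F, q ≠ 0 → Polynomial.eval₂ F.subtype a q = 0 →
        p.degree ≤ q.degree) ∧
      -- in particular `a` is algebraic over `F`:
      (∃ q : Polynomial F, q ≠ 0 ∧ Polynomial.eval₂ F.subtype a q = 0) := by
  have hsimple := eval₂_derivative_ne_zero_of_forall_degree_le _ hmonic hroot hmin
  obtain ⟨a, ha, rfl⟩ :=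
    HenselianLocalRing.exists_eval₂_eq_zero_residue_eq F.subtype hmonic hroot hsimple
  refine ⟨a, ha, ?_, rfl, fun q hq hqa => hmin q hq ?_, p, hmonic.ne_zero, ha⟩
  · rwa [← residue_ne_zero_iff_isUnit, residue_eval₂]
  · rw [← residue_eval₂, hqa, map_zero]

/-- Let `R` be a Henselian local ring with residue field `Δ` of
characteristic zero and residue map `φ`, `F ⊆ R` a subfield, and `α ∈ Δ` a nonzero
element algebraic over `F' = φ(F)` with monic minimal polynomial `f̄ ∈ F'[X]`.  Lifting
the coefficients of `f̄` to `F` gives a monic polynomial `f ∈ F[X]` (below: the data `p`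
with `φ`-image having `α` as a root of minimal degree).  Then there is `a ∈ R` which is a
root of `f`, indeed a simple root (the derivative of `f` is a unit at `a`), with
`φ a = α`, and `f` is the minimal polynomial of `a` over `F`; in particular `a` is
algebraic over `F`. -/
theorem statement8 (R : Type u) [CommRing R] [IsLocalRing R] [HenselianLocalRing R]
    [CharZero (IsLocalRing.ResidueField R)]
    (F : Subring R) (hF : IsField F)
    (α : IsLocalRing.ResidueField R) (hα : α ≠ 0)
    (p : Polynomial F) (hmonic : p.Monic)
    -- `α` is a root of the image `f̄` of `p` in `F'[X] ⊆ Δ[X]`: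
    (hroot : Polynomial.eval₂ ((IsLocalRing.residue R).comp F.subtype) α p = 0)
    -- `f̄` is the minimal polynomial of `α` over `F'`, i.e. of minimal degree:
    (hmin : ∀ q : Polynomial F, q ≠ 0 →
      Polynomial.eval₂ ((IsLocalRing.residue R).comp F.subtype) α q = 0 →
      p.degree ≤ q.degree) :
    ∃ a : R,
      -- `a` is a root of `f`:
      Polynomial.eval₂ F.subtype a p = 0 ∧
      -- `a` is a simple root of `f`:
      IsUnit (Polynomial.eval₂ F.subtype a (Polynomial.derivative p)) ∧
      -- `φ a = α`:
      IsLocalRing.residue R a = α ∧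
      -- `f` is the minimal polynomial of `a` over `F`:
      (∀ q : Polynomial F, q ≠ 0 → Polynomial.eval₂ F.subtype a q = 0 →
        p.degree ≤ q.degree) ∧
      -- in particular `a` is algebraic over `F`:
      (∃ q : Polynomial F, q ≠ 0 ∧ Polynomial.eval₂ F.subtype a q = 0) :=
  statement8_general R F α p hmonic hroot hmin
end

section
/- Let R be a Henselian local ring whose residue field Δ = R/m has characteristic 0, with residue map φ : R → Δ, and let F ⊆ R be a subfield. Then there exists a subfield L of R with F ⊆ L such that φ restricts to a field isomorphism of L onto Δ; equivalently, there exists a ring homomorphism σ : Δ → R with φ∘σ = id_Δ whose image contains F. -/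
/-!
By Zorn's lemma there is a subring `L ⊇ F` maximal among those on which the residue map is
injective (i.e. meeting `m` only in `0`); it remains to show that every `x ∈ Δ` lifts into `L`.
The nonzero elements of `L` avoid `m`, hence are units, so the fraction field `K` of `L` embeds
in `R`. If `x` is transcendental over `K`, any lift `a` of `x` gives a subring `K[a]` still meeting
`m` trivially. If `x` is algebraic, its minimal polynomial is separable since `char Δ = 0`, so
Hensel's lemma lifts `x` to a root `a` of that polynomial, and again `K[a] ∩ m = 0`. Maximality
forces `a ∈ L`. The inverse of the bijection `L → Δ` is then the required section.
-/

open IsLocalRing Polynomial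

universe u

namespace RingHom

variable {R S : Type*} [Ring R] [Ring S]

theorem exists_maximal_injective_comp_subtype (φ : R →+* S) {F : Subring R}
    (hF : Function.Injective (φ.comp F.subtype)) :
    ∃ L : Subring R, F ≤ L ∧
      Maximal (fun A : Subring R ↦ Function.Injective (φ.comp A.subtype)) L := by
  refine zorn_le_nonempty₀ {A : Subring R | Function.Injective (φ.comp A.subtype)}
    (fun c hc hchain A hA ↦ ⟨sSup c, ?_, fun B hB ↦ le_sSup hB⟩) F hF
  rw [Set.mem_ofPred_eq, injective_iff_map_eq_zero]
  rintro ⟨y, hy⟩ hy0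
  obtain ⟨B, hBc, hyB⟩ := (Subring.mem_sSup_of_directedOn ⟨A, hA⟩ hchain.directedOn).1 hy
  exact Subtype.ext (show y = 0 from
    congrArg Subtype.val ((injective_iff_map_eq_zero _).1 (hc hBc) ⟨y, hyB⟩ hy0))

theorem exists_comp_eq_id_range_eq {φ : R →+* S} {L : Subring R}
    (h : Function.Bijective (φ.comp L.subtype)) :
    ∃ σ : S →+* R, φ.comp σ = RingHom.id S ∧ Set.range σ = L := by
  let e := RingEquiv.ofBijective _ h
  refine ⟨L.subtype.comp e.symm.toRingHom, RingHom.ext e.apply_symm_apply, ?_⟩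
  ext y
  refine ⟨fun ⟨x, hx⟩ ↦ hx ▸ (e.symm x).2, fun hy ↦ ⟨e ⟨y, hy⟩, ?_⟩⟩
  simp

end RingHom

namespace IsLocalRing

theorem injective_residue_comp_adjoin_of_ker_le {K R : Type*} [CommRing K] [CommRing R]
    [IsLocalRing R] [Algebra K R] {a : R}
    (h : RingHom.ker (aeval (R := K) (residue R a)) ≤ RingHom.ker (aeval (R := K) a)) :
    Function.Injective ((residue R).comp (Algebra.adjoin K {a}).toSubring.subtype) := by
  rw [injective_iff_map_eq_zero]
  rintro ⟨y, hy⟩ hy0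
  obtain ⟨p, rfl⟩ :=
    (Algebra.adjoin_singleton_eq_range_aeval K a ▸ hy : y ∈ (aeval a).range)
  have hp : aeval (residue R a) p = 0 := by
    rw [← ResidueField.algebraMap_eq, aeval_algebraMap_apply]
    exact hy0
  exact Subtype.ext (h hp)

variable {R : Type*} [CommRing R] [HenselianLocalRing R] [CharZero (ResidueField R)]

theorem exists_residue_eq_injective_residue_comp_adjoin {K : Type*} [Field K] [Algebra K R]
    (x : ResidueField R) :
    ∃ a : R, residue R a = x ∧
      Function.Injective ((residue R).comp (Algebra.adjoin K {a}).toSubring.subtype) := by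
  by_cases hx : IsAlgebraic K x
  · have hint := hx.isIntegral
    have : CharZero K := RingHom.charZero (algebraMap K (ResidueField R))
    have hensel := ((HenselianLocalRing.TFAE R).out 0 1).mp ‹_›
    obtain ⟨a, hroot, rfl⟩ := hensel ((minpoly K x).map (algebraMap K R))
      ((minpoly.monic hint).map _) x
      (by rw [aeval_map_algebraMap, minpoly.aeval])
      (by rw [derivative_map, aeval_map_algebraMap]
          exact (minpoly.irreducible hint).separable.aeval_derivative_ne_zero (minpoly.aeval K _))
    refine ⟨a, rfl, injective_residue_comp_adjoin_of_ker_le ?_⟩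
    rw [minpoly.ker_aeval_eq_span_minpoly]
    exact (Ideal.span_singleton_le_iff_mem _).2
      (by rwa [RingHom.mem_ker, aeval_def, eval₂_eq_eval_map])
  · obtain ⟨a, rfl⟩ := residue_surjective x
    refine ⟨a, rfl, injective_residue_comp_adjoin_of_ker_le ?_⟩
    rw [transcendental_iff_ker_eq_bot.1 hx]
    exact bot_le

theorem exists_le_injective_residue_comp_subtype_and_residue_eq {A : Subring R}
    (hA : Function.Injective ((residue R).comp A.subtype)) (x : ResidueField R) :
    ∃ B : Subring R, A ≤ B ∧ Function.Injective ((residue R).comp B.subtype) ∧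
      ∃ b ∈ B, residue R b = x := by
  have : IsDomain A := hA.isDomain
  -- Nonzero elements of `A` lie outside `m`, so are units: the fraction field of `A` embeds in `R`.
  let : Algebra (FractionRing A) R := RingHom.toAlgebra <|
    IsLocalization.lift (M := nonZeroDivisors A) (g := A.subtype) fun a ↦
      (residue_ne_zero_iff_isUnit _).1 fun h ↦
        nonZeroDivisors.coe_ne_zero a (hA (h.trans (map_zero _).symm))
  obtain ⟨a, rfl, ha⟩ := exists_residue_eq_injective_residue_comp_adjoin (K := FractionRing A) x
  refine ⟨_, fun y hy ↦ ?_, ha, a, Algebra.self_mem_adjoin_singleton _ _, rfl⟩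
  have hy' : algebraMap (FractionRing A) R (algebraMap A _ ⟨y, hy⟩) = y :=
    IsLocalization.lift_eq _ _
  exact hy' ▸ Subalgebra.algebraMap_mem _ _

end IsLocalRing

/-- Let `R` be a Henselian local ring whose residue field
`Δ = R / m` has characteristic zero, with residue map `φ : R → Δ`, and let `F ⊆ R` be a
subfield.  Then there is a subfield `L` of `R` containing `F` such that `φ` restricts to
a field isomorphism of `L` onto `Δ`; equivalently, there is a ring homomorphism section
`σ : Δ → R` of `φ` whose image contains `F`. -/
theorem statement9 (R : Type u) [CommRing R] [IsLocalRing R] [HenselianLocalRing R]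
    [CharZero (IsLocalRing.ResidueField R)]
    (F : Subring R) (hF : IsField F) :
    (∃ L : Subring R, F ≤ L ∧
      Function.Bijective ((IsLocalRing.residue R).comp L.subtype)) ∧
    (∃ σ : IsLocalRing.ResidueField R →+* R,
      (IsLocalRing.residue R).comp σ = RingHom.id (IsLocalRing.ResidueField R) ∧
      (F : Set R) ⊆ Set.range σ) := by
  have hF' : Function.Injective ((residue R).comp F.subtype) := by
    let := hF.toField
    exact RingHom.injective _
  obtain ⟨L, hFL, hL⟩ := (residue R).exists_maximal_injective_comp_subtype hF'
  have hsurj : Function.Surjective ((residue R).comp L.subtype) := fun x ↦ by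
    obtain ⟨B, hLB, hB, b, hb, rfl⟩ :=
      exists_le_injective_residue_comp_subtype_and_residue_eq hL.prop x
    exact ⟨⟨b, hL.2 hB hLB hb⟩, rfl⟩
  obtain ⟨σ, hσ, hrange⟩ := RingHom.exists_comp_eq_id_range_eq ⟨hL.prop, hsurj⟩
  exact ⟨⟨L, hFL, hL.prop, hsurj⟩, σ, hσ, hrange ▸ hFL⟩
end

section
/- Let R be a discrete valuation ring that is complete with respect to its maximal-ideal-adic topology, let Δ be its residue field, let σ : Δ → R be a ring homomorphism section of the residue map R → Δ, and let θ ∈ R be a uniformizer (an element of the maximal ideal generating it, i.e. of value 1). Then the map Φ : Δ[[t]] → R defined by Φ(Σ_{i≥0} α_i t^i) = Σ_{i≥0} σ(α_i) θ^i (the series converging in the complete ring R) is a ring isomorphism, sending t to θ and each constant power series α ∈ Δ to σ(α). -/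
/-!
Since `θ ∈ I`, the truncated sums `f ↦ ∑_{i<n} σ(fᵢ) θⁱ` are ring maps `k⟦X⟧ → S ⧸ Iⁿ` (the
error of truncating a product is divisible by `Xⁿ`, which goes to `Iⁿ`), compatible in `n`, so
`I`-adic completeness glues them into a ring map `Φ : k⟦X⟧ → S`. If `I = (θ)` with `θ` regular
and `σ` induces `k ≃ S ⧸ I`, then `Φ` is bijective: an element of the kernel is divisible by
every power of `X` (cancel `θ`, then reduce modulo `I`), and every `r ∈ S` is the image of its
`θ`-adic digit expansion.
-/

open Polynomial in
theorem Polynomial.eval₂_mem_pow_of_X_pow_dvd {k S : Type*} [Semiring k] [CommRing S]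
    {I : Ideal S} (σ : k →+* S) {θ : S} (hθ : θ ∈ I) {p : k[X]} {n : ℕ} (hp : X ^ n ∣ p) :
    p.eval₂ σ θ ∈ I ^ n := by
  obtain ⟨q, rfl⟩ := hp
  rw [eval₂_mul, eval₂_X_pow]
  exact Ideal.mul_mem_right _ _ (Ideal.pow_mem_pow hθ n)

theorem IsHausdorff.eq_of_forall_mk_pow_eq {S : Type*} [CommRing S] (I : Ideal S)
    [IsHausdorff I S] {x y : S}
    (h : ∀ n, Ideal.Quotient.mk (I ^ n) x = Ideal.Quotient.mk (I ^ n) y) : x = y :=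
  congrFun (IsHausdorff.funext' I (f := fun _ : Unit ↦ x) (g := fun _ ↦ y) fun n _ ↦ h n) ()

namespace PowerSeries

open Polynomial

theorem X_pow_dvd_sub_trunc_coe {R : Type*} [Ring R] (p : R[X]) (n : ℕ) :
    (Polynomial.X : R[X]) ^ n ∣ p - trunc n (p : R⟦X⟧) := by
  rw [Polynomial.X_pow_dvd_iff]
  intro d hd
  rw [Polynomial.coeff_sub, coeff_trunc, if_pos hd, Polynomial.coeff_coe, sub_self]

variable {k S : Type*} [CommRing k] [CommRing S]

variable (I : Ideal S) (σ : k →+* S) {θ : S}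

theorem mk_eval₂_trunc_coe (hθ : θ ∈ I) (p : k[X]) (n : ℕ) :
    Ideal.Quotient.mk (I ^ n) ((trunc n (p : k⟦X⟧)).eval₂ σ θ) =
      Ideal.Quotient.mk (I ^ n) (p.eval₂ σ θ) := by
  refine (Ideal.Quotient.eq.mpr ?_).symm
  rw [← eval₂_sub]
  exact eval₂_mem_pow_of_X_pow_dvd σ hθ (X_pow_dvd_sub_trunc_coe p n)

variable (hθ : θ ∈ I)

noncomputable def truncEval₂Mod (n : ℕ) : k⟦X⟧ →+* S ⧸ I ^ n where
  toFun f := Ideal.Quotient.mk (I ^ n) ((trunc n f).eval₂ σ θ)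
  map_one' := by
    rw [← Polynomial.coe_one, mk_eval₂_trunc_coe I σ hθ, eval₂_one, map_one]
  map_mul' f g := by
    rw [← trunc_trunc_mul_trunc, ← Polynomial.coe_mul, mk_eval₂_trunc_coe I σ hθ, eval₂_mul,
      map_mul]
  map_zero' := by simp
  map_add' f g := by simp

theorem factorPow_comp_truncEval₂Mod {m n : ℕ} (hle : m ≤ n) :
    (Ideal.Quotient.factorPow I hle).comp (truncEval₂Mod I σ hθ n) = truncEval₂Mod I σ hθ m := by
  ext f
  simp only [RingHom.comp_apply, truncEval₂Mod, RingHom.coe_mk, MonoidHom.coe_mk, OneHom.coe_mk]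
  rw [Ideal.Quotient.factor_mk, ← trunc_trunc_of_le f hle, mk_eval₂_trunc_coe I σ hθ]

variable [IsAdicComplete I S]

noncomputable def adicEval₂ : k⟦X⟧ →+* S :=
  IsAdicComplete.liftRingHom I (truncEval₂Mod I σ hθ) (factorPow_comp_truncEval₂Mod I σ hθ)

theorem mk_adicEval₂ (f : k⟦X⟧) (n : ℕ) :
    Ideal.Quotient.mk (I ^ n) (adicEval₂ I σ hθ f) =
      Ideal.Quotient.mk (I ^ n) ((trunc n f).eval₂ σ θ) :=
  IsAdicComplete.mk_liftRingHom I _ _ n f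

theorem adicEval₂_sub_sum_mem (f : k⟦X⟧) (n : ℕ) :
    adicEval₂ I σ hθ f - ∑ i ∈ Finset.range n, σ (coeff i f) * θ ^ i ∈ I ^ n := by
  rw [← eval₂_trunc_eq_sum_range, ← Ideal.Quotient.eq]
  exact mk_adicEval₂ I σ hθ f n

theorem adicEval₂_eq_of_forall_mk_pow_eq {f : k⟦X⟧} {x : S}
    (h : ∀ n, Ideal.Quotient.mk (I ^ n) ((trunc n f).eval₂ σ θ) = Ideal.Quotient.mk (I ^ n) x) :
    adicEval₂ I σ hθ f = x :=
  IsHausdorff.eq_of_forall_mk_pow_eq I fun n ↦ (mk_adicEval₂ I σ hθ f n).trans (h n)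

theorem adicEval₂_coe (p : k[X]) : adicEval₂ I σ hθ (p : k⟦X⟧) = p.eval₂ σ θ :=
  adicEval₂_eq_of_forall_mk_pow_eq I σ hθ fun n ↦ mk_eval₂_trunc_coe I σ hθ p n

theorem adicEval₂_X : adicEval₂ I σ hθ X = θ := by
  simpa using adicEval₂_coe I σ hθ Polynomial.X

theorem adicEval₂_C (a : k) : adicEval₂ I σ hθ (C a) = σ a := by
  simpa using adicEval₂_coe I σ hθ (Polynomial.C a)

theorem constantCoeff_eq_zero_of_adicEval₂_eq_zero
    (hinj : Function.Injective ((Ideal.Quotient.mk I).comp σ)) {f : k⟦X⟧}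
    (hf : adicEval₂ I σ hθ f = 0) : constantCoeff f = 0 := by
  refine (injective_iff_map_eq_zero _).mp hinj _ (Ideal.Quotient.eq_zero_iff_mem.mpr ?_)
  simpa [hf] using adicEval₂_sub_sum_mem I σ hθ f 1

theorem adicEval₂_injective (hinj : Function.Injective ((Ideal.Quotient.mk I).comp σ))
    (hreg : IsLeftRegular θ) : Function.Injective (adicEval₂ I σ hθ) := by
  refine (injective_iff_map_eq_zero _).mpr fun f hf ↦ ?_
  have hdvd : ∀ n, X ^ n ∣ f := by
    intro n
    induction n with
    | zero => exact pow_zero (X : k⟦X⟧) ▸ one_dvd f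
    | succ n ih =>
      obtain ⟨g, rfl⟩ := ih
      have hg : adicEval₂ I σ hθ g = 0 := hreg.pow n <| by
        rwa [map_mul, map_pow, adicEval₂_X, ← mul_zero (θ ^ n)] at hf
      rw [pow_succ]
      exact mul_dvd_mul_left _
        (X_dvd_iff.mpr (constantCoeff_eq_zero_of_adicEval₂_eq_zero I σ hθ hinj hg))
  ext n
  simpa using X_pow_dvd_iff.mp (hdvd (n + 1)) n (lt_add_one n)

theorem adicEval₂_surjective (hI : I ≤ Ideal.span {θ})
    (hsurj : Function.Surjective ((Ideal.Quotient.mk I).comp σ)) :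
    Function.Surjective (adicEval₂ I σ hθ) := by
  have hdigit : ∀ r : S, ∃ a q, r = σ a + θ * q := by
    intro r
    obtain ⟨a, ha⟩ := hsurj (Ideal.Quotient.mk I r)
    obtain ⟨q, hq⟩ := Ideal.mem_span_singleton.mp (hI (Ideal.Quotient.eq.mp ha.symm))
    exact ⟨a, q, by rw [← hq]; ring⟩
  choose digit next hnext using hdigit
  intro x
  set r : ℕ → S := fun n ↦ next^[n] x
  set f : k⟦X⟧ := mk fun n ↦ digit (r n)
  have hrem : ∀ n, x = (trunc n f).eval₂ σ θ + θ ^ n * r n := by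
    intro n
    induction n with
    | zero => simp [r]
    | succ n ih =>
      rw [eval₂_trunc_eq_sum_range] at ih ⊢
      rw [Finset.sum_range_succ, coeff_mk,
        show r (n + 1) = next (r n) from Function.iterate_succ_apply' next n x]
      linear_combination ih + θ ^ n * hnext (r n)
  refine ⟨f, adicEval₂_eq_of_forall_mk_pow_eq I σ hθ fun n ↦ (Ideal.Quotient.eq.mpr ?_).symm⟩
  rw [hrem n, add_sub_cancel_left]
  exact Ideal.mul_mem_right _ _ (Ideal.pow_mem_pow hθ n)

end PowerSeries

/-- Let `R` be a complete discrete valuation ring with residue field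
`Δ`, `σ : Δ → R` a ring homomorphism section of the residue map, and `θ ∈ R` a
uniformizer.  Then the map `Φ : Δ[[t]] → R`, `Φ (Σ αᵢ tⁱ) = Σ σ(αᵢ) θⁱ` (the series
converging in the complete ring `R`, i.e. `Φ f` is congruent to the partial sums modulo
every power of the maximal ideal), is a ring isomorphism sending `t` to `θ` and each
constant `α` to `σ α`. -/
theorem statement10 (R : Type u) [CommRing R] [IsDomain R] [IsDiscreteValuationRing R]
    [IsAdicComplete (IsLocalRing.maximalIdeal R) R]
    (σ : IsLocalRing.ResidueField R →+* R)
    (hσ : (IsLocalRing.residue R).comp σ = RingHom.id (IsLocalRing.ResidueField R))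
    (θ : R) (hθ : Ideal.span {θ} = IsLocalRing.maximalIdeal R) :
    ∃ Φ : PowerSeries (IsLocalRing.ResidueField R) ≃+* R,
      (∀ (f : PowerSeries (IsLocalRing.ResidueField R)) (N : ℕ),
        Φ f - ∑ i ∈ Finset.range N,
          σ (PowerSeries.coeff (R := IsLocalRing.ResidueField R) i f) * θ ^ i ∈
            IsLocalRing.maximalIdeal R ^ N) ∧
      Φ PowerSeries.X = θ ∧
      (∀ a : IsLocalRing.ResidueField R,
        Φ (PowerSeries.C (R := IsLocalRing.ResidueField R) a) = σ a) := by
  have hθm : θ ∈ IsLocalRing.maximalIdeal R := hθ ▸ Ideal.mem_span_singleton_self θ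
  have hσ' : (Ideal.Quotient.mk (IsLocalRing.maximalIdeal R)).comp σ = RingHom.id _ := hσ
  have hreg : IsLeftRegular θ := (IsRegular.of_ne_zero
    ((IsDiscreteValuationRing.irreducible_iff_uniformizer θ).mpr hθ.symm).ne_zero).left
  open PowerSeries in
  exact ⟨RingEquiv.ofBijective (adicEval₂ _ σ hθm)
      ⟨adicEval₂_injective _ σ hθm (hσ' ▸ Function.injective_id) hreg,
        adicEval₂_surjective _ σ hθm hθ.ge (hσ' ▸ Function.surjective_id)⟩,
    adicEval₂_sub_sum_mem _ σ hθm, adicEval₂_X _ σ hθm, adicEval₂_C _ σ hθm⟩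
end

section
/- Let n ≥ 2 and let v be a rank-one discrete valuation of K_n|k centered at the maximal ideal M_n. Then the dimension of v is at least 1: there exists f ∈ K_n with v(f) = 0 whose residue f + m_v in the residue field Δ_v is transcendental over k. -/
/-!
Suppose the residue field of `v` were algebraic over `k`, hence equal to `k`. After rescaling `v`
so that some `π` has value `1`, every `z` with `v z ≥ 0` has a `π`-adic expansion
`z = ∑ cⱼ πʲ` with `cⱼ ∈ k`, and expansions add and multiply like power series. Let `F` and `G`
be the expansions of `X₀` and `X₁`, and `p ≥ 1` the order of `F`. Since `k⟦T⟧` is generated by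
`1, T, …, T^(p-1)` over `k⟦F⟧`, the `p + 1` powers `1, G, …, G^p` satisfy a nontrivial linear
relation `∑ qⱼ(F) Gʲ = 0` with `qⱼ ∈ k⟦X⟧`. Then `H = ∑ qⱼ(X₀) X₁ʲ` is a nonzero element of `R_n`,
yet truncating the `qⱼ` in degree `N` shows `v H ≥ N` for every `N`, which is absurd.
-/

/-- `R_n = k[[X_1, …, X_n]]`. -/
abbrev Rn (k : Type u) [Field k] (n : ℕ) := MvPowerSeries (Fin n) k

/-- `K_n = k((X_1, …, X_n))`, the quotient field of `R_n`. -/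
abbrev Kn (k : Type u) [Field k] (n : ℕ) := FractionRing (Rn k n)

/-- The canonical map `R_n → K_n`. -/
noncomputable abbrev toKn (k : Type u) [Field k] (n : ℕ) : Rn k n →+* Kn k n :=
  algebraMap (Rn k n) (Kn k n)

/-- The canonical map `k → K_n`. -/
noncomputable abbrev cstKn (k : Type u) [Field k] (n : ℕ) : k →+* Kn k n :=
  (toKn k n).comp (algebraMap k (Rn k n))

open PowerSeries

namespace PowerSeries

section CommRing

variable {R : Type*} [CommRing R]

lemma eq_sum_C_mul_X_pow_add_X_pow_mul (p : ℕ) (h : R⟦X⟧) :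
    h = ∑ i : Fin p, C (coeff i h) * X ^ (i : ℕ) + X ^ p * mk fun n => coeff (n + p) h := by
  ext n
  simp only [map_add, map_sum, coeff_C_mul_X_pow, coeff_X_pow_mul', coeff_mk]
  rcases lt_or_ge n p with hn | hn
  · rw [Finset.sum_eq_single ⟨n, hn⟩ (fun i _ hi => if_neg fun h => hi (Fin.ext h.symm))
      (by simp)]
    simp [not_le.mpr hn]
  · rw [Finset.sum_eq_zero fun i _ => if_neg (by omega)]
    simp [hn, Nat.sub_add_cancel hn]

theorem exists_eq_sum_substAlgHom_mul_X_pow {F U : R⟦X⟧} {p : ℕ} (hp : 0 < p) (hU : IsUnit U)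
    (hF : F = X ^ p * U) (ha : HasSubst F) (h : R⟦X⟧) :
    ∃ u : Fin p → R⟦X⟧, h = ∑ i, substAlgHom ha (u i) * X ^ (i : ℕ) := by
  set ψ := substAlgHom (R := R) ha
  let D : R⟦X⟧ → R⟦X⟧ := fun g => ↑hU.unit⁻¹ * mk fun n => coeff (n + p) g
  have hD : ∀ g, g = ∑ i : Fin p, C (coeff i g) * X ^ (i : ℕ) + F * D g := fun g => by
    rw [hF, mul_assoc, ← mul_assoc U, hU.mul_val_inv, one_mul]
    exact eq_sum_C_mul_X_pow_add_X_pow_mul p g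
  let u : R⟦X⟧ → Fin p → R⟦X⟧ := fun g i => mk fun m => coeff i (D^[m] g)
  have hu : ∀ g i, u g i = C (coeff i g) + X * u (D g) i := fun g i => by
    ext (_ | m) <;> simp [u, coeff_succ_X_mul, Function.iterate_succ_apply]
  let E : R⟦X⟧ → R⟦X⟧ := fun g => g - ∑ i, ψ (u g i) * X ^ (i : ℕ)
  have hψu : ∀ g i, ψ (u g i) = C (coeff i g) + F * ψ (u (D g) i) := fun g i => by
    rw [hu g i, map_add, map_mul, substAlgHom_X, coe_substAlgHom, subst_C]
    rfl
  -- `E` is the error of the expansion; it reproduces itself times `F` under the shift `D`.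
  have hE : ∀ g, E g = F * E (D g) := fun g => by
    simp only [E, hψu g, add_mul, Finset.sum_add_distrib, mul_sub, Finset.mul_sum, mul_assoc]
    nth_rewrite 1 [hD g]
    ring
  have hdvd : ∀ M g, F ^ M ∣ E g := by
    intro M
    induction M with
    | zero => simp
    | succ M ih => exact fun g => by rw [hE g, pow_succ']; exact mul_dvd_mul_left F (ih (D g))
  refine ⟨u h, sub_eq_zero.mp (ext fun m => ?_)⟩
  have hX : X ^ (m + 1) ∣ E h := (pow_dvd_pow_of_dvd (hF ▸ dvd_mul_of_dvd_left
    (dvd_pow_self X hp.ne') U) _).trans (hdvd (m + 1) h)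
  simpa [E] using X_pow_dvd_iff.mp hX m (by omega)

end CommRing

theorem exists_ne_zero_eval₂_substAlgHom_eq_zero {k : Type*} [Field k] {F : k⟦X⟧} (hF0 : F ≠ 0)
    (hF : constantCoeff F = 0) (G : k⟦X⟧) :
    ∃ Q : Polynomial k⟦X⟧, Q ≠ 0 ∧
      Q.eval₂ (substAlgHom (HasSubst.of_constantCoeff_zero' hF)).toRingHom G = 0 := by
  classical
  set p := F.order.toNat
  have hU : IsUnit F.divXPowOrder := isUnit_iff_constantCoeff.mpr
    (isUnit_iff_ne_zero.mpr (constantCoeff_divXPowOrder_eq_zero_iff.not.mpr hF0))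
  have hp : 0 < p := ENat.toNat_pos
    (order_ne_zero_iff_constCoeff_eq_zero.mpr hF) (order_eq_top.not.mpr hF0)
  choose u hu using fun j : Fin (p + 1) => exists_eq_sum_substAlgHom_mul_X_pow hp hU
    X_pow_order_mul_divXPowOrder.symm (HasSubst.of_constantCoeff_zero' hF) (G ^ (j : ℕ))
  -- The powers `G ^ j`, `j ≤ p`, are `p + 1` vectors in a module generated by `p` elements.
  let M : Matrix (Fin (p + 1)) (Fin (p + 1)) k⟦X⟧ := fun i j =>
    if hi : (i : ℕ) < p then u j ⟨i, hi⟩ else 0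
  obtain ⟨c, hc, hMc⟩ := Matrix.exists_mulVec_eq_zero_iff (M := M) |>.mpr
    (Matrix.det_eq_zero_of_row_eq_zero (Fin.last p) fun j => by simp [M])
  obtain ⟨j₀, hj₀⟩ := Function.ne_iff.mp hc
  refine ⟨∑ j : Fin (p + 1), Polynomial.monomial (j : ℕ) (c j), fun hQ => hj₀ ?_, ?_⟩
  · have := congrArg (Polynomial.coeff · j₀) hQ
    simpa [Polynomial.finsetSum_coeff, Polynomial.coeff_monomial, Fin.val_inj] using this
  · have hrow : ∀ i : Fin p, ∑ j, u j i * c j = 0 := fun i => by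
      simpa [M, Matrix.mulVec, dotProduct] using congrFun hMc i.castSucc
    simp only [Polynomial.eval₂_finsetSum, Polynomial.eval₂_monomial, AlgHom.toRingHom_eq_coe,
      RingHom.coe_coe, hu, Finset.mul_sum]
    rw [Finset.sum_comm]
    refine Finset.sum_eq_zero fun i _ => ?_
    simp only [← mul_assoc, ← map_mul, ← Finset.sum_mul, ← map_sum, mul_comm (c _), hrow, map_zero,
      zero_mul]

section TruncEval

variable {R A B : Type*} [CommRing R] [CommRing A] [Algebra R A] [CommRing B] [Algebra R B]

noncomputable def truncEval (N : ℕ) (Q : Polynomial R⟦X⟧) (s t : A) : A :=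
  Q.sum fun j a => Polynomial.aeval s (trunc N a) * t ^ j

lemma map_truncEval (f : A →ₐ[R] B) (N : ℕ) (Q : Polynomial R⟦X⟧) (s t : A) :
    f (truncEval N Q s t) = truncEval N Q (f s) (f t) := by
  simp [truncEval, Polynomial.sum_def, Polynomial.aeval_algHom_apply]

lemma algHom_coe_eq_aeval (ψ : R⟦X⟧ →ₐ[R] A) (p : Polynomial R) :
    ψ (p : R⟦X⟧) = Polynomial.aeval (ψ X) p := by
  induction p using Polynomial.induction_on with
  | C a => simpa using ψ.commutes a
  | add p q hp hq => simp [hp, hq]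
  | monomial n a h => simp_all [pow_succ, ← mul_assoc]

lemma pow_dvd_sub_aeval_trunc (ψ : R⟦X⟧ →ₐ[R] A) (N : ℕ) (q : R⟦X⟧) :
    ψ X ^ N ∣ ψ q - Polynomial.aeval (ψ X) (trunc N q) := by
  obtain ⟨r, hr⟩ : X ^ N ∣ q - (trunc N q : R⟦X⟧) := X_pow_dvd_iff.mpr fun m hm => by
    simp [coeff_trunc, hm]
  exact ⟨ψ r, by rw [← algHom_coe_eq_aeval, ← map_sub, hr, map_mul, map_pow]⟩

lemma pow_dvd_eval₂_sub_truncEval (ψ : R⟦X⟧ →ₐ[R] A) (N : ℕ) (Q : Polynomial R⟦X⟧) (t : A) :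
    ψ X ^ N ∣ Q.eval₂ ψ.toRingHom t - truncEval N Q (ψ X) t := by
  rw [Polynomial.eval₂_eq_sum, truncEval, Polynomial.sum_def, Polynomial.sum_def,
    ← Finset.sum_sub_distrib]
  refine Finset.dvd_sum fun j _ => ?_
  rw [← sub_mul]
  exact dvd_mul_of_dvd_left (pow_dvd_sub_aeval_trunc ψ N _) _

end TruncEval

end PowerSeries

namespace AddValuation

variable {K : Type*} [Field K]

noncomputable def ofInt (v : K → ℤ) (hmul : ∀ x y : K, x ≠ 0 → y ≠ 0 → v (x * y) = v x + v y)
    (hmin : ∀ x y : K, x ≠ 0 → y ≠ 0 → x + y ≠ 0 → min (v x) (v y) ≤ v (x + y)) :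
    AddValuation K (WithTop ℤ) := by
  classical
  refine AddValuation.of (fun z => if z = 0 then ⊤ else (v z : WithTop ℤ)) (by simp) ?_ ?_ ?_
  · have := hmul 1 1 one_ne_zero one_ne_zero
    simp only [mul_one] at this
    simp [show v 1 = 0 by omega]
  · intro x y
    by_cases hx : x = 0
    · simp [hx]
    by_cases hy : y = 0
    · simp [hy]
    by_cases hxy : x + y = 0
    · simp [hxy]
    simp only [hx, hy, hxy, if_false]
    exact_mod_cast hmin x y hx hy hxy
  · intro x y
    by_cases hx : x = 0
    · simp [hx]
    by_cases hy : y = 0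
    · simp [hy]
    simp only [hx, hy, mul_eq_zero, or_self, if_false]
    exact_mod_cast hmul x y hx hy

lemma ofInt_apply {v : K → ℤ} {hmul hmin} {z : K} (hz : z ≠ 0) :
    ofInt v hmul hmin z = v z := by
  simp [ofInt, AddValuation.of_apply, hz]

variable (w : AddValuation K (WithTop ℤ))

lemma eq_zero_of_forall_natCast_le {z : K} (h : ∀ N : ℕ, (N : WithTop ℤ) ≤ w z) : z = 0 := by
  by_contra hz
  obtain ⟨m, hm⟩ := WithTop.ne_top_iff_exists.mp (w.ne_top_iff.mpr hz)
  have := h (m.toNat + 1)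
  rw [← hm] at this
  norm_cast at this
  omega

end AddValuation

namespace WithTop

variable {a : WithTop ℤ} {N : ℕ}

lemma natCast_le_add_natCast_iff : (N : WithTop ℤ) ≤ a + N ↔ 0 ≤ a := by
  induction a using WithTop.recTopCoe with
  | top => simp
  | coe m => norm_cast; omega

lemma natCast_lt_add_natCast_iff : (N : WithTop ℤ) < a + N ↔ 0 < a := by
  induction a using WithTop.recTopCoe with
  | top => simp
  | coe m => norm_cast; omega

lemma natCast_add_one_le_iff : ((N + 1 : ℕ) : WithTop ℤ) ≤ a ↔ (N : WithTop ℤ) < a := by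
  induction a using WithTop.recTopCoe with
  | top => simp
  | coe m => norm_cast

end WithTop

section Expansion

variable {k K : Type*} [Field k] [Field K] [Algebra k K]

def HasExpansion (w : AddValuation K (WithTop ℤ)) (π z : K) (b : k⟦X⟧) : Prop :=
  ∀ N : ℕ, (N : WithTop ℤ) ≤ w (z - Polynomial.aeval π (trunc N b))

variable {w : AddValuation K (WithTop ℤ)} {π : K}

namespace HasExpansion

variable {z z' : K} {b b' : k⟦X⟧}

lemma nonneg (h : HasExpansion w π z b) : 0 ≤ w z := by
  simpa using h 0

lemma add (h : HasExpansion w π z b) (h' : HasExpansion w π z' b') :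
    HasExpansion w π (z + z') (b + b') := fun N => by
  rw [map_add, map_add, add_sub_add_comm]
  exact w.map_le_add (h N) (h' N)

lemma natCast_le_of_X_pow_dvd (h : HasExpansion w π z b) {N : ℕ} (hb : X ^ N ∣ b) :
    (N : WithTop ℤ) ≤ w z := by
  have : trunc N b = 0 := Polynomial.ext fun m => by
    rw [coeff_trunc]
    split_ifs with hm
    · exact X_pow_dvd_iff.mp hb m hm
    · rfl
  simpa [this] using h N

lemma ne_zero (h : HasExpansion w π z b) (hz : z ≠ 0) : b ≠ 0 := by
  rintro rfl
  exact hz (w.eq_zero_of_forall_natCast_le fun N => h.natCast_le_of_X_pow_dvd (dvd_zero _))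

end HasExpansion

variable (hπ : w π = 1) (hk : ∀ c : k, c ≠ 0 → w (algebraMap k K c) = 0)
  (hres : ∀ u : K, w u = 0 → ∃ c : k, 0 < w (u - algebraMap k K c))

include hπ hres in
lemma exists_lt_valuation_sub_algebraMap_mul_pow {r : K} {N : ℕ} (hr : (N : WithTop ℤ) ≤ w r) :
    ∃ c : k, (N : WithTop ℤ) < w (r - algebraMap k K c * π ^ N) := by
  have hπ0 : π ≠ 0 := by
    rintro rfl
    simp at hπ
  have hπN : w (π ^ N) = N := by rw [w.map_pow, hπ, nsmul_one]
  obtain ⟨u, rfl⟩ : ∃ u, r = u * π ^ N := ⟨r / π ^ N, (div_mul_cancel₀ r (pow_ne_zero N hπ0)).symm⟩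
  rw [w.map_mul, hπN, WithTop.natCast_le_add_natCast_iff] at hr
  obtain ⟨c, hc⟩ : ∃ c : k, 0 < w (u - algebraMap k K c) := by
    rcases hr.lt_or_eq with hu | hu
    · exact ⟨0, by simpa using hu⟩
    · exact hres u hu.symm
  refine ⟨c, ?_⟩
  rw [← sub_mul, w.map_mul, hπN, WithTop.natCast_lt_add_natCast_iff]
  exact hc

include hπ hres in
theorem exists_hasExpansion {z : K} (hz : 0 ≤ w z) : ∃ b : k⟦X⟧, HasExpansion w π z b := by
  have step : ∀ (P : Polynomial k) (N : ℕ), ∃ c : k,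
      (N : WithTop ℤ) ≤ w (z - Polynomial.aeval π P) →
      ((N + 1 : ℕ) : WithTop ℤ) ≤ w (z - Polynomial.aeval π (P + Polynomial.monomial N c)) := by
    intro P N
    by_cases hP : (N : WithTop ℤ) ≤ w (z - Polynomial.aeval π P)
    · obtain ⟨c, hc⟩ := exists_lt_valuation_sub_algebraMap_mul_pow hπ hres hP
      refine ⟨c, fun _ => ?_⟩
      rwa [map_add, Polynomial.aeval_monomial, ← sub_sub, WithTop.natCast_add_one_le_iff]
    · exact ⟨0, fun h => absurd h hP⟩
  choose digit hdigit using step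
  let P : ℕ → Polynomial k := fun N => N.rec 0 fun N PN => PN + Polynomial.monomial N (digit PN N)
  have hP : ∀ N : ℕ, (N : WithTop ℤ) ≤ w (z - Polynomial.aeval π (P N)) := by
    intro N
    induction N with
    | zero => simpa [P] using hz
    | succ N ih => exact hdigit _ _ ih
  refine ⟨mk fun N => digit (P N) N, fun N => ?_⟩
  have htrunc : trunc N (mk fun N => digit (P N) N) = P N := by
    induction N with
    | zero => simp [P]
    | succ N ih => rw [trunc_succ, ih, coeff_mk]
  rw [htrunc]
  exact hP N

include hk in
lemma valuation_algebraMap_nonneg (c : k) : 0 ≤ w (algebraMap k K c) := by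
  by_cases hc : c = 0
  · simp [hc]
  · exact (hk c hc).ge

include hk in
lemma valuation_aeval_nonneg (hπ₀ : 0 ≤ w π) (P : Polynomial k) :
    0 ≤ w (Polynomial.aeval π P) := by
  rw [Polynomial.aeval_eq_sum_range]
  refine w.map_le_sum fun i _ => ?_
  rw [Algebra.smul_def, w.map_mul, w.map_pow]
  exact add_nonneg (valuation_algebraMap_nonneg hk _) (nsmul_nonneg hπ₀ i)

include hπ hk in
lemma natCast_le_valuation_aeval_of_X_pow_dvd {N : ℕ} {P : Polynomial k}
    (hP : Polynomial.X ^ N ∣ P) : (N : WithTop ℤ) ≤ w (Polynomial.aeval π P) := by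
  obtain ⟨P, rfl⟩ := hP
  rw [map_mul, map_pow, Polynomial.aeval_X, w.map_mul, w.map_pow, hπ, nsmul_one]
  exact le_add_of_nonneg_right (valuation_aeval_nonneg hk (hπ ▸ zero_le_one) P)

include hk in
lemma hasExpansion_algebraMap (c : k) :
    HasExpansion w π (algebraMap k K c) (algebraMap k k⟦X⟧ c) := by
  rintro (_ | N)
  · simpa using valuation_algebraMap_nonneg hk c
  · simp [trunc_C]

namespace HasExpansion

variable {z z' : K} {b b' : k⟦X⟧}

include hk in
lemma constantCoeff_eq_zero (h : HasExpansion w π z b) (hz : 0 < w z) : constantCoeff b = 0 := by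
  by_contra hb
  have h1 := h 1
  rw [show trunc 1 b = Polynomial.C (constantCoeff b) by ext (_ | m) <;> simp,
    Polynomial.aeval_C, w.map_sub_eq_of_lt_right (by rwa [hk _ hb]), hk _ hb] at h1
  exact absurd h1 (by norm_num)

include hπ hk in
lemma mul (h : HasExpansion w π z b) (h' : HasExpansion w π z' b') :
    HasExpansion w π (z * z') (b * b') := fun N => by
  set P := trunc N b
  set P' := trunc N b'
  have hdvd : Polynomial.X ^ N ∣ P * P' - trunc N ((P * P' : Polynomial k) : k⟦X⟧) :=
    Polynomial.X_pow_dvd_iff.mpr fun d hd => by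
      rw [Polynomial.coeff_sub, coeff_trunc, if_pos hd, Polynomial.coeff_coe, sub_self]
  have key : z * z' - Polynomial.aeval π (trunc N (b * b')) = (z - Polynomial.aeval π P) * z' +
      Polynomial.aeval π P * (z' - Polynomial.aeval π P') +
      Polynomial.aeval π (P * P' - trunc N ((P * P' : Polynomial k) : k⟦X⟧)) := by
    rw [← trunc_trunc_mul_trunc, ← Polynomial.coe_mul]
    simp only [map_sub, map_mul]
    ring
  rw [key]
  refine w.map_le_add (w.map_le_add ?_ ?_) (natCast_le_valuation_aeval_of_X_pow_dvd hπ hk hdvd)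
  · rw [w.map_mul]
    exact le_add_of_le_of_nonneg (h N) h'.nonneg
  · rw [w.map_mul]
    exact le_add_of_nonneg_of_le (valuation_aeval_nonneg hk (hπ ▸ zero_le_one) P) (h' N)

end HasExpansion

include hπ hk in
def expansionSubalgebra : Subalgebra k (K × k⟦X⟧) where
  carrier := {p | HasExpansion w π p.1 p.2}
  mul_mem' ha hb := HasExpansion.mul hπ hk ha hb
  add_mem' ha hb := HasExpansion.add ha hb
  algebraMap_mem' c := hasExpansion_algebraMap hk c

include hπ hk in
lemma HasExpansion.truncEval {x y : K} {F G : k⟦X⟧} (hx : HasExpansion w π x F)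
    (hy : HasExpansion w π y G) (N : ℕ) (Q : Polynomial k⟦X⟧) :
    HasExpansion w π (PowerSeries.truncEval N Q x y) (PowerSeries.truncEval N Q F G) := by
  let S := expansionSubalgebra hπ hk
  have hmem : PowerSeries.truncEval N Q (x, F) (y, G) ∈ S := by
    rw [show ((x, F) : K × k⟦X⟧) = S.val ⟨(x, F), hx⟩ from rfl,
      show ((y, G) : K × k⟦X⟧) = S.val ⟨(y, G), hy⟩ from rfl, ← map_truncEval]
    exact Subtype.prop _
  have h1 := map_truncEval (AlgHom.fst k K k⟦X⟧) N Q (x, F) (y, G)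
  have h2 := map_truncEval (AlgHom.snd k K k⟦X⟧) N Q (x, F) (y, G)
  simp only [AlgHom.fst_apply, AlgHom.snd_apply] at h1 h2
  rw [← h1, ← h2]
  exact hmem

include hk in
theorem exists_valuation_sub_algebraMap_pos [IsAlgClosed k] {z : K} (hz : w z = 0)
    {p : Polynomial k} (hp : p ≠ 0) (hpz : w (Polynomial.aeval z p) ≠ 0) :
    ∃ c : k, 0 < w (z - algebraMap k K c) := by
  by_contra! h
  have hfac : ∀ c : k, w (z - algebraMap k K c) = 0 := fun c =>
    le_antisymm (h c) (w.map_le_sub hz.ge (valuation_algebraMap_nonneg hk c))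
  apply hpz
  rw [(IsAlgClosed.splits p).eq_prod_roots, map_mul, Polynomial.aeval_C, map_multiset_prod,
    Multiset.map_map, w.map_mul, hk _ (Polynomial.leadingCoeff_ne_zero.mpr hp), zero_add]
  simp only [Function.comp_def, map_sub, Polynomial.aeval_X, Polynomial.aeval_C]
  induction p.roots using Multiset.induction_on with
  | empty => simp
  | cons a s ih => simp [w.map_mul, hfac, ih]

include hπ hk hres in
theorem not_injective_of_forall_eq_truncEval_add (Φ : Polynomial k⟦X⟧ →+* K)
    (hx : 0 < w (Φ (Polynomial.C X))) (hy : 0 < w (Φ Polynomial.X))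
    (hΦ : ∀ (N : ℕ) (Q : Polynomial k⟦X⟧), ∃ e : K, 0 ≤ w e ∧
      Φ Q = truncEval N Q (Φ (Polynomial.C X)) (Φ Polynomial.X) + Φ (Polynomial.C X) ^ N * e) :
    ¬ Function.Injective Φ := by
  intro hinj
  have hx0 : Φ (Polynomial.C X) ≠ 0 :=
    (map_ne_zero_iff Φ hinj).mpr (Polynomial.C_ne_zero.mpr X_ne_zero)
  obtain ⟨F, hF⟩ := exists_hasExpansion hπ hres hx.le
  obtain ⟨G, hG⟩ := exists_hasExpansion hπ hres hy.le
  have hF0 := hF.constantCoeff_eq_zero hk hx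
  obtain ⟨Q, hQ0, hQ⟩ := exists_ne_zero_eval₂_substAlgHom_eq_zero (hF.ne_zero hx0) hF0 G
  refine hQ0 (hinj ((w.eq_zero_of_forall_natCast_le fun N => ?_).trans (map_zero Φ).symm))
  obtain ⟨e, he, hQe⟩ := hΦ N Q
  have hXF : X ^ N ∣ truncEval N Q F G := by
    have := pow_dvd_eval₂_sub_truncEval (substAlgHom (HasSubst.of_constantCoeff_zero' hF0)) N Q G
    rw [hQ, substAlgHom_X, zero_sub, dvd_neg] at this
    exact (pow_dvd_pow_of_dvd (X_dvd_iff.mpr hF0) N).trans this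
  rw [hQe]
  refine w.map_le_add ((hF.truncEval hπ hk hG N Q).natCast_le_of_X_pow_dvd hXF) ?_
  have h1 : (1 : WithTop ℤ) ≤ w (Φ (Polynomial.C X)) := by
    simpa using (WithTop.natCast_add_one_le_iff (N := 0)).mpr (by simpa using hx)
  rw [w.map_mul, w.map_pow]
  calc (N : WithTop ℤ) = N • 1 := (nsmul_one N).symm
    _ ≤ N • w (Φ (Polynomial.C X)) := nsmul_le_nsmul_right h1 N
    _ ≤ _ := le_add_of_nonneg_right he

end Expansion

section Normalization

variable {K : Type*} [Field K] (v : K → ℤ)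
  (hmul : ∀ x y : K, x ≠ 0 → y ≠ 0 → v (x * y) = v x + v y)

include hmul in
theorem exists_pos_forall_dvd {x : K} (hx : x ≠ 0) (hvx : v x ≠ 0) :
    ∃ π : K, π ≠ 0 ∧ 0 < v π ∧ ∀ z : K, z ≠ 0 → v π ∣ v z := by
  have hv1 : v 1 = 0 := by have := hmul 1 1 one_ne_zero one_ne_zero; simp at this; omega
  have hvinv : ∀ z : K, z ≠ 0 → v z⁻¹ = -v z := fun z hz => by
    have := hmul z z⁻¹ hz (inv_ne_zero hz)
    rw [mul_inv_cancel₀ hz, hv1] at this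
    omega
  let Γ : AddSubgroup ℤ :=
    { carrier := {m | ∃ z : K, z ≠ 0 ∧ v z = m}
      zero_mem' := ⟨1, one_ne_zero, hv1⟩
      add_mem' := by
        rintro _ _ ⟨z, hz, rfl⟩ ⟨z', hz', rfl⟩
        exact ⟨z * z', mul_ne_zero hz hz', hmul z z' hz hz'⟩
      neg_mem' := by
        rintro _ ⟨z, hz, rfl⟩
        exact ⟨z⁻¹, inv_ne_zero hz, hvinv z hz⟩ }
  obtain ⟨g, hg⟩ := Int.subgroup_cyclic Γ
  have hdvd : ∀ z : K, z ≠ 0 → g ∣ v z := fun z hz => by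
    have : v z ∈ Γ := ⟨z, hz, rfl⟩
    obtain ⟨c, hc⟩ := AddSubgroup.mem_closure_singleton.mp (hg ▸ this)
    exact ⟨c, by rw [← hc, smul_eq_mul, mul_comm]⟩
  obtain ⟨π, hπ, hπg⟩ : g ∈ Γ := hg ▸ AddSubgroup.subset_closure rfl
  have hg0 : g ≠ 0 := fun h => hvx (zero_dvd_iff.mp (h ▸ hdvd x hx))
  rcases lt_or_gt_of_ne hg0 with hneg | hpos
  · refine ⟨π⁻¹, inv_ne_zero hπ, by rw [hvinv π hπ, hπg]; omega, fun z hz => ?_⟩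
    rw [hvinv π hπ, hπg, Int.neg_dvd]
    exact hdvd z hz
  · exact ⟨π, hπ, hπg ▸ hpos, fun z hz => hπg ▸ hdvd z hz⟩

include hmul in
theorem exists_normalized_addValuation
    (hmin : ∀ x y : K, x ≠ 0 → y ≠ 0 → x + y ≠ 0 → min (v x) (v y) ≤ v (x + y))
    {x : K} (hx : x ≠ 0) (hvx : v x ≠ 0) :
    ∃ (w : AddValuation K (WithTop ℤ)) (π : K), w π = 1 ∧ ∀ z : K, z ≠ 0 →
      (0 < w z ↔ 0 < v z) ∧ (0 ≤ w z ↔ 0 ≤ v z) ∧ (w z = 0 ↔ v z = 0) := by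
  obtain ⟨π, hπ, hd, hdvd⟩ := exists_pos_forall_dvd v hmul hx hvx
  set d := v π
  have hmul' : ∀ x y : K, x ≠ 0 → y ≠ 0 → v (x * y) / d = v x / d + v y / d := fun x y hx hy => by
    rw [hmul x y hx hy, Int.add_ediv_of_dvd_left (hdvd x hx)]
  have hmin' : ∀ x y : K, x ≠ 0 → y ≠ 0 → x + y ≠ 0 →
      min (v x / d) (v y / d) ≤ v (x + y) / d := fun x y hx hy hxy => by
    rcases min_le_iff.mp (hmin x y hx hy hxy) with h | h
    · exact min_le_of_left_le (Int.ediv_le_ediv hd h)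
    · exact min_le_of_right_le (Int.ediv_le_ediv hd h)
  refine ⟨AddValuation.ofInt (fun z => v z / d) hmul' hmin', π, ?_, fun z hz => ?_⟩
  · rw [AddValuation.ofInt_apply hπ, Int.ediv_self hd.ne']
    rfl
  · obtain ⟨m, hm⟩ := hdvd z hz
    rw [AddValuation.ofInt_apply hz, hm, Int.mul_ediv_cancel_left _ hd.ne']
    norm_cast
    exact ⟨(mul_pos_iff_of_pos_left hd).symm, (mul_nonneg_iff_of_pos_left hd).symm,
      by simp [hd.ne']⟩

end Normalization

namespace MvPowerSeries

variable {R σ : Type*} [CommRing R] (e : Option Unit ↪ σ)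

-- `R⟦X⟧[Y] → R⟦X, Y⟧ → R⟦σ⟧`, sending `X` to the variable `e (some ())` and `Y` to `e none`.
noncomputable def ofPolynomialPowerSeries : Polynomial R⟦X⟧ →+* MvPowerSeries σ R :=
  ((rename e).toRingHom.comp (optionEquivLeft Unit R).symm.toRingHom).comp
    Polynomial.coeToPowerSeries.ringHom

lemma ofPolynomialPowerSeries_injective :
    Function.Injective (ofPolynomialPowerSeries (R := R) e) :=
  (rename_injective e).comp ((optionEquivLeft Unit R).symm.injective.comp
    (Polynomial.coe_injective _))

lemma ofPolynomialPowerSeries_C_C (c : R) :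
    ofPolynomialPowerSeries e (Polynomial.C (PowerSeries.C c)) = MvPowerSeries.C c := by
  have : (optionEquivLeft Unit R).symm (PowerSeries.C (PowerSeries.C c)) = C c := by
    rw [AlgEquiv.symm_apply_eq, optionEquivLeft_C]
    rfl
  simp [ofPolynomialPowerSeries, this]

lemma ofPolynomialPowerSeries_C_X :
    ofPolynomialPowerSeries (R := R) e (Polynomial.C PowerSeries.X) = X (e (some ())) := by
  have : (optionEquivLeft Unit R).symm (PowerSeries.C PowerSeries.X) = X (some ()) := by
    rw [AlgEquiv.symm_apply_eq, optionEquivLeft_X_some]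
    rfl
  simp [ofPolynomialPowerSeries, this]

lemma ofPolynomialPowerSeries_X :
    ofPolynomialPowerSeries (R := R) e Polynomial.X = X (e none) := by
  have : (optionEquivLeft Unit R).symm PowerSeries.X = X none := by
    rw [AlgEquiv.symm_apply_eq, optionEquivLeft_X_none]
  simp [ofPolynomialPowerSeries, this]

theorem exists_ofPolynomialPowerSeries_eq_truncEval_add (N : ℕ) (Q : Polynomial R⟦X⟧) :
    ∃ E : MvPowerSeries σ R, ofPolynomialPowerSeries e Q =
      truncEval N Q (X (e (some ()))) (X (e none)) + X (e (some ())) ^ N * E := by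
  let ψ : R⟦X⟧ →ₐ[R] MvPowerSeries σ R :=
    { (ofPolynomialPowerSeries e).comp Polynomial.C with
      commutes' := ofPolynomialPowerSeries_C_C e }
  have hψX : ψ PowerSeries.X = X (e (some ())) := ofPolynomialPowerSeries_C_X e
  obtain ⟨E, hE⟩ := pow_dvd_eval₂_sub_truncEval ψ N Q (X (e none))
  refine ⟨E, ?_⟩
  rw [← hψX, ← hE, add_sub_cancel, ← ofPolynomialPowerSeries_X, ← Polynomial.eval₂_C_X (p := Q),
    Polynomial.hom_eval₂, Polynomial.eval₂_C_X]

end MvPowerSeries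

section Transcendence

variable {k K : Type*} [Field k] [Field K] [Algebra k K]

theorem exists_transcendental_residue [IsAlgClosed k] (v : K → ℤ)
    (hmul : ∀ x y : K, x ≠ 0 → y ≠ 0 → v (x * y) = v x + v y)
    (hmin : ∀ x y : K, x ≠ 0 → y ≠ 0 → x + y ≠ 0 → min (v x) (v y) ≤ v (x + y))
    (hk : ∀ c : k, c ≠ 0 → v (algebraMap k K c) = 0)
    (Φ : Polynomial k⟦X⟧ →+* K) (hinj : Function.Injective Φ)
    (hx : 0 < v (Φ (Polynomial.C X))) (hy : 0 < v (Φ Polynomial.X))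
    (hΦ : ∀ (N : ℕ) (Q : Polynomial k⟦X⟧), ∃ e : K, (e ≠ 0 → 0 ≤ v e) ∧
      Φ Q = truncEval N Q (Φ (Polynomial.C X)) (Φ Polynomial.X) + Φ (Polynomial.C X) ^ N * e) :
    ∃ f : K, f ≠ 0 ∧ v f = 0 ∧ ∀ p : Polynomial k, p ≠ 0 →
      Polynomial.aeval f p ≠ 0 ∧ v (Polynomial.aeval f p) = 0 := by
  by_contra! hcon
  have hΦ0 : ∀ {Q}, Q ≠ 0 → Φ Q ≠ 0 := (map_ne_zero_iff Φ hinj).mpr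
  obtain ⟨w, π, hπ, hw⟩ := exists_normalized_addValuation v hmul hmin
    (hΦ0 (Polynomial.C_ne_zero.mpr X_ne_zero)) hx.ne'
  have hk' : ∀ c : k, c ≠ 0 → w (algebraMap k K c) = 0 := fun c hc =>
    (hw _ ((map_ne_zero_iff _ (algebraMap k K).injective).mpr hc)).2.2.mpr (hk c hc)
  have hres : ∀ u : K, w u = 0 → ∃ c : k, 0 < w (u - algebraMap k K c) := fun u hu => by
    have hu0 : u ≠ 0 := by
      rintro rfl
      simp at hu
    obtain ⟨p, hp, hpu⟩ := hcon u hu0 ((hw u hu0).2.2.mp hu)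
    refine exists_valuation_sub_algebraMap_pos hk' hu hp fun hpw => ?_
    have h0 : Polynomial.aeval u p ≠ 0 := by
      rintro h
      simp [h] at hpw
    exact hpu h0 ((hw _ h0).2.2.mp hpw)
  refine not_injective_of_forall_eq_truncEval_add hπ hk' hres Φ
    ((hw _ (hΦ0 (Polynomial.C_ne_zero.mpr X_ne_zero))).1.mpr hx)
    ((hw _ (hΦ0 Polynomial.X_ne_zero)).1.mpr hy) (fun N Q => ?_) hinj
  obtain ⟨e, he, hQ⟩ := hΦ N Q
  refine ⟨e, ?_, hQ⟩
  rcases eq_or_ne e 0 with rfl | he0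
  · simp
  · exact (hw e he0).2.1.mpr (he he0)

end Transcendence

theorem statement12_general (k : Type u) [Field k] [IsAlgClosed k]
    (n : ℕ) (hn : 2 ≤ n)
    (v : Kn k n → ℤ)
    -- `v` is a valuation on `K_n`:
    (hmul : ∀ x y : Kn k n, x ≠ 0 → y ≠ 0 → v (x * y) = v x + v y)
    (hmin : ∀ x y : Kn k n, x ≠ 0 → y ≠ 0 → x + y ≠ 0 → min (v x) (v y) ≤ v (x + y))
    -- `v` vanishes on `k^×`:
    (hconst : ∀ c : k, c ≠ 0 → v (toKn k n (MvPowerSeries.C (σ := Fin n) (R := k) c)) = 0)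
    -- `v` is nonnegative on `R_n ∖ {0}`:
    (hnonneg : ∀ f : Rn k n, f ≠ 0 → 0 ≤ v (toKn k n f))
    -- the center of `v` in `R_n` is the maximal ideal `M_n`:
    (hcenter : ∀ f : Rn k n, f ≠ 0 →
      (0 < v (toKn k n f) ↔ MvPowerSeries.constantCoeff (σ := Fin n) (R := k) f = 0)) :
    ∃ f : Kn k n, f ≠ 0 ∧ v f = 0 ∧
      ∀ p : Polynomial k, p ≠ 0 →
        Polynomial.eval₂ (cstKn k n) f p ≠ 0 ∧
        v (Polynomial.eval₂ (cstKn k n) f p) = 0 := by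
  let e : Option Unit ↪ Fin n := ⟨fun o => o.elim ⟨1, by omega⟩ fun _ => ⟨0, by omega⟩, by
    rintro (_ | _) (_ | _) <;> simp [Fin.ext_iff]⟩
  let ι := MvPowerSeries.ofPolynomialPowerSeries (R := k) e
  have htoKn : Function.Injective (toKn k n) := IsFractionRing.injective _ _
  have hvX : ∀ i, 0 < v (toKn k n (MvPowerSeries.X i)) := fun i =>
    (hcenter _ (fun h => by simpa using congrArg (MvPowerSeries.coeff (Finsupp.single i 1)) h)).mpr
      (MvPowerSeries.constantCoeff_X i)
  refine exists_transcendental_residue v hmul hmin hconst ((toKn k n).comp ι)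
    (htoKn.comp (MvPowerSeries.ofPolynomialPowerSeries_injective e))
    (by simpa [ι, MvPowerSeries.ofPolynomialPowerSeries_C_X] using hvX _)
    (by simpa [ι, MvPowerSeries.ofPolynomialPowerSeries_X] using hvX _) fun N Q => ?_
  obtain ⟨E, hE⟩ := MvPowerSeries.exists_ofPolynomialPowerSeries_eq_truncEval_add e N Q
  refine ⟨toKn k n E, fun hE0 => hnonneg E (by rintro rfl; simp at hE0), ?_⟩
  simp only [RingHom.comp_apply, ι, MvPowerSeries.ofPolynomialPowerSeries_C_X,
    MvPowerSeries.ofPolynomialPowerSeries_X, hE, map_add, map_mul, map_pow]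
  congr 1
  exact map_truncEval (IsScalarTower.toAlgHom k (Rn k n) (Kn k n)) N Q _ _

/-- For `n ≥ 2`, every rank-one discrete valuation `v` of `K_n | k`
centered at `M_n` has dimension at least `1`: there is `f ∈ K_n` with `v f = 0` whose
residue `f + m_v ∈ Δ_v` is transcendental over `k`; concretely, every nonzero polynomial
over `k` evaluated at `f` is nonzero of value `0` (hence has nonzero residue). -/
theorem statement12 (k : Type u) [Field k] [IsAlgClosed k] [CharZero k]
    (n : ℕ) (hn : 2 ≤ n)
    (v : Kn k n → ℤ)
    -- `v` is a valuation on `K_n`: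
    (hmul : ∀ x y : Kn k n, x ≠ 0 → y ≠ 0 → v (x * y) = v x + v y)
    (hmin : ∀ x y : Kn k n, x ≠ 0 → y ≠ 0 → x + y ≠ 0 → min (v x) (v y) ≤ v (x + y))
    -- `v` vanishes on `k^×`:
    (hconst : ∀ c : k, c ≠ 0 → v (toKn k n (MvPowerSeries.C (σ := Fin n) (R := k) c)) = 0)
    -- `v` is nonnegative on `R_n ∖ {0}`:
    (hnonneg : ∀ f : Rn k n, f ≠ 0 → 0 ≤ v (toKn k n f))
    -- the center of `v` in `R_n` is the maximal ideal `M_n`: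
    (hcenter : ∀ f : Rn k n, f ≠ 0 →
      (0 < v (toKn k n f) ↔ MvPowerSeries.constantCoeff (σ := Fin n) (R := k) f = 0)) :
    ∃ f : Kn k n, f ≠ 0 ∧ v f = 0 ∧
      ∀ p : Polynomial k, p ≠ 0 →
        Polynomial.eval₂ (cstKn k n) f p ≠ 0 ∧
        v (Polynomial.eval₂ (cstKn k n) f p) = 0 :=
  statement12_general k n hn v hmul hmin hconst hnonneg hcenter
end
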